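/- arXiv:1206.1763 — 2 statements merged into one kernel-verified Lean document; each statement's English description precedes it below -/
import Mathlib

section
/- Let A and D be self-adjoint operators on a Hilbert space with common domain, P a bounded self-adjoint operator of finite rank such that the commutator identities make sense, and suppose A = D + A_0 + Ã where A_0, Ã are bounded self-adjoint operators and A_0 = i[P, D]. Then ‖e^{-iP} A e^{iP} − (D + Ã)‖ ≤ ‖[P, Ã]‖ + (1/2)‖[[D,P],P]‖. -/
/-!
Put `Q = iP`; it is skew-adjoint, so every `e^{sQ}` is unitary and conjugation by it is
isometric. The path `f s = e^{-sQ} (D + s A₀ + Ã) e^{sQ}` runs from `D + Ã` to `e^{-iP} A e^{iP}`,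
and `f' s = e^{-sQ} (A₀ + [D + s A₀ + Ã, Q]) e^{sQ}`. Because `A₀ = [Q, D]`, the terms
`A₀ + [D, Q]` cancel and `f' s = e^{-sQ} (s [A₀, Q] + [Ã, Q]) e^{sQ}`, whose norm is at most
`‖[P, Ã]‖ + s ‖[[D, P], P]‖`. Integrating this bound over `[0, 1]` gives the estimate.
-/

open NormedSpace Set

theorem Complex.I_smul_mul_I_smul {𝔸 : Type*} [Ring 𝔸] [Algebra ℂ 𝔸] (x y : 𝔸) :
    (I • x) * (I • y) = -(x * y) := by
  rw [smul_mul_smul_comm, I_mul_I, neg_one_smul]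

theorem add_commutator_eq_of_eq_commutator {R 𝔸 : Type*} [CommRing R] [Ring 𝔸] [Algebra R 𝔸]
    (s : R) {Q D A₀ : 𝔸} (B : 𝔸) (h : A₀ = Q * D - D * Q) :
    A₀ + ((D + s • A₀ + B) * Q - Q * (D + s • A₀ + B)) =
      s • (A₀ * Q - Q * A₀) + (B * Q - Q * B) := by
  rw [h]
  simp only [add_mul, mul_add, sub_mul, mul_sub, smul_mul_assoc, mul_smul_comm, smul_sub]
  abel

section CStarAlgebra

variable {A : Type*} [NormedRing A] [NormedAlgebra ℂ A] [StarRing A] [CStarRing A]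
  [CompleteSpace A] [StarModule ℂ A]

theorem IsSelfAdjoint.norm_exp_neg_mul_mul_exp {a : A} (ha : IsSelfAdjoint a) (x : A) :
    ‖NormedSpace.exp (-(Complex.I • a)) * x * NormedSpace.exp (Complex.I • a)‖ = ‖x‖ := by
  have hunitary {b : A} (hb : IsSelfAdjoint b) : NormedSpace.exp (Complex.I • b) ∈ unitary A :=
    (selfAdjoint.expUnitary ⟨b, hb⟩).prop
  rw [← smul_neg, CStarRing.norm_mul_mem_unitary _ (hunitary ha),
    CStarRing.norm_mem_unitary_mul _ (hunitary ha.neg)]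

end CStarAlgebra

theorem hasDerivAt_exp_neg_smul_mul_mul_exp_smul {𝔸 : Type*} [NormedRing 𝔸] [NormedAlgebra ℝ 𝔸]
    [CompleteSpace 𝔸] (Q : 𝔸) {M : ℝ → 𝔸} {M' : 𝔸} {s : ℝ} (hM : HasDerivAt M M' s) :
    HasDerivAt (fun u : ℝ => exp (-(u • Q)) * M u * exp (u • Q))
      (exp (-(s • Q)) * (M' + (M s * Q - Q * M s)) * exp (s • Q)) s := by
  have hneg : HasDerivAt (fun u : ℝ => exp (-(u • Q))) (exp (-(s • Q)) * -Q) s := by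
    simpa only [← smul_neg] using hasDerivAt_exp_smul_const (𝕂 := ℝ) (-Q) s
  refine ((hneg.mul hM).mul (hasDerivAt_exp_smul_const (𝕂 := ℝ) Q s)).congr_deriv ?_
  rw [Pi.mul_apply, ← ((Commute.refl Q).smul_right s).exp_right.eq]
  noncomm_ring

theorem norm_sub_le_of_norm_deriv_le_affine {E : Type*} [NormedAddCommGroup E] [NormedSpace ℝ E]
    {f f' : ℝ → E} {a b : ℝ} (hf : ∀ s ∈ Icc (0 : ℝ) 1, HasDerivAt f (f' s) s)
    (bound : ∀ s ∈ Ico (0 : ℝ) 1, ‖f' s‖ ≤ a + b * s) : ‖f 1 - f 0‖ ≤ a + b / 2 := by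
  have hB (s : ℝ) : HasDerivAt (fun s => a * s + b * (s ^ 2 / 2)) (a + b * s) s :=
    (((hasDerivAt_id s).const_mul a).add
      (((hasDerivAt_pow 2 s).div_const 2).const_mul b)).congr_deriv (by ring)
  have := image_norm_le_of_norm_deriv_right_le_deriv_boundary (f := fun s => f s - f 0)
    (fun s hs => ((hf s hs).sub_const _).continuousAt.continuousWithinAt)
    (fun s hs => ((hf s (Ico_subset_Icc_self hs)).sub_const _).hasDerivWithinAt)
    (by simp) hB bound (right_mem_Icc.mpr zero_le_one)
  linarith

theorem conjugation_estimate_general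
    {H : Type*} [NormedAddCommGroup H] [InnerProductSpace ℂ H] [CompleteSpace H]
    (A D A₀ Atil P : H →L[ℂ] H)
    (hP : IsSelfAdjoint P)
    (hsum : A = D + A₀ + Atil)
    (hcomm : A₀ = Complex.I • (P * D - D * P)) :
    ‖NormedSpace.exp (-(Complex.I • P)) * A * NormedSpace.exp (Complex.I • P) - (D + Atil)‖
      ≤ ‖P * Atil - Atil * P‖
        + (1 / 2) * ‖(D * P - P * D) * P - P * (D * P - P * D)‖ := by
  set Q : H →L[ℂ] H := Complex.I • P
  have hA₀ : A₀ = Q * D - D * Q := by rw [hcomm, smul_mul_assoc, mul_smul_comm, smul_sub]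
  have hA₀_comm : A₀ * Q - Q * A₀ = (D * P - P * D) * P - P * (D * P - P * D) := by
    rw [hcomm, Complex.I_smul_mul_I_smul, Complex.I_smul_mul_I_smul]
    noncomm_ring
  have hAtil_comm : ‖Atil * Q - Q * Atil‖ = ‖P * Atil - Atil * P‖ := by
    rw [smul_mul_assoc, mul_smul_comm, ← smul_sub, norm_smul, Complex.norm_I, one_mul,
      ← norm_neg, neg_sub]
  have hderiv (s : ℝ) : HasDerivAt
      (fun u : ℝ => exp (-(u • Q)) * (D + u • A₀ + Atil) * exp (u • Q))
      (exp (-(s • Q)) * (s • (A₀ * Q - Q * A₀) + (Atil * Q - Q * Atil)) * exp (s • Q)) s := by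
    rw [← add_commutator_eq_of_eq_commutator s Atil hA₀]
    exact hasDerivAt_exp_neg_smul_mul_mul_exp_smul Q
      (by simpa using (((hasDerivAt_id s).smul_const A₀).const_add D).add_const Atil)
  have hbound (s : ℝ) (hs : s ∈ Ico (0 : ℝ) 1) :
      ‖exp (-(s • Q)) * (s • (A₀ * Q - Q * A₀) + (Atil * Q - Q * Atil)) * exp (s • Q)‖
        ≤ ‖P * Atil - Atil * P‖ + ‖(D * P - P * D) * P - P * (D * P - P * D)‖ * s := by
    rw [show s • Q = Complex.I • (s • P) from smul_comm s Complex.I P,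
      ((IsSelfAdjoint.all s).smul hP).norm_exp_neg_mul_mul_exp]
    calc _ ≤ ‖s • (A₀ * Q - Q * A₀)‖ + ‖Atil * Q - Q * Atil‖ := norm_add_le _ _
      _ = _ := by rw [norm_smul, Real.norm_of_nonneg hs.1, hA₀_comm, hAtil_comm]; ring
  have := norm_sub_le_of_norm_deriv_le_affine (fun s _ => hderiv s) hbound
  simp only [one_smul, zero_smul, neg_zero, exp_zero, one_mul, mul_one, add_zero] at this
  rw [hsum]
  linarith

/-- Lemma 4.1. Let `A = D + A₀ + Ã` with `A`, `D`, `A₀`, `Ã`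
self-adjoint, `P` self-adjoint of finite rank, and `A₀ = i[P, D]` (so `P`
solves the commutator equation `A₀ + [D, iP] = 0`). Then
`‖e^{-iP} A e^{iP} − (D + Ã)‖ ≤ ‖[P, Ã]‖ + (1/2)‖[[D,P],P]‖`. -/
theorem conjugation_estimate
    {H : Type*} [NormedAddCommGroup H] [InnerProductSpace ℂ H] [CompleteSpace H]
    (A D A₀ Atil P : H →L[ℂ] H)
    (hA : IsSelfAdjoint A) (hD : IsSelfAdjoint D) (hA₀ : IsSelfAdjoint A₀)
    (hAtil : IsSelfAdjoint Atil) (hP : IsSelfAdjoint P)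
    (hrank : FiniteDimensional ℂ (LinearMap.range (P : H →ₗ[ℂ] H)))
    (hsum : A = D + A₀ + Atil)
    (hcomm : A₀ = Complex.I • (P * D - D * P)) :
    ‖NormedSpace.exp (-(Complex.I • P)) * A * NormedSpace.exp (Complex.I • P) - (D + Atil)‖
      ≤ ‖P * Atil - Atil * P‖
        + (1 / 2) * ‖(D * P - P * D) * P - P * (D * P - P * D)‖ :=
  conjugation_estimate_general A D A₀ Atil P hP hsum hcomm
end

section
/- Let D be a self-adjoint operator and P a bounded self-adjoint finite rank operator on a Hilbert space (so that [D,P] and [[D,P],P] are bounded). Define G(s) = e^{-isP}(D + is[P,D])e^{isP} − D. Then ‖G(1)‖ ≤ (1/2)‖[[D,P],P]‖. -/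
/-!
Write `U s = exp (s • I • P)`, a unitary since `I • P` is skew-adjoint, and
`G s = U s⁻¹ (D + I s [P, D]) U s - D`. Differentiating,
`G' s = U s⁻¹ (I [P, D] + [D + I s [P, D], I P]) U s`, in which the terms of order zero in `s`
cancel, leaving `G' s = s • U s⁻¹ [[D, P], P] U s`. Hence `G 0 = 0` and
`‖G' s‖ = s ‖[[D, P], P]‖`, and comparison with `s ↦ s² ‖[[D, P], P]‖ / 2` on `[0, 1]` gives
the bound.
-/

open NormedSpace Complex Set

theorem norm_le_of_norm_deriv_le_mul {E : Type*} [NormedAddCommGroup E] [NormedSpace ℝ E]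
    {f f' : ℝ → E} {c x : ℝ} (hx : 0 ≤ x) (h0 : f 0 = 0)
    (hf : ∀ s ∈ Icc 0 x, HasDerivAt f (f' s) s) (bound : ∀ s ∈ Ico 0 x, ‖f' s‖ ≤ c * s) :
    ‖f x‖ ≤ c * x ^ 2 / 2 := by
  refine image_norm_le_of_norm_deriv_right_le_deriv_boundary
    (fun s hs => (hf s hs).continuousAt.continuousWithinAt)
    (fun s hs => (hf s (Ico_subset_Icc_self hs)).hasDerivWithinAt)
    (B := fun s => c * s ^ 2 / 2) (B' := fun s => c * s) (by simp [h0]) (fun s => ?_) bound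
    ⟨hx, le_rfl⟩
  exact (((hasDerivAt_pow 2 s).const_mul c).div_const 2).congr_deriv (by norm_num; ring)

section Conjugation

variable {A : Type*} [NormedRing A] [NormedAlgebra ℂ A] [CompleteSpace A]

theorem hasDerivAt_exp_ofReal_smul (B : A) (s : ℝ) :
    HasDerivAt (fun t : ℝ => exp ((t : ℂ) • B)) (exp ((s : ℂ) • B) * B) s := by
  simpa [Function.comp_def] using
    (hasDerivAt_exp_smul_const B (s : ℂ)).scomp s ofRealCLM.hasDerivAt

theorem hasDerivAt_exp_ofReal_smul' (B : A) (s : ℝ) :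
    HasDerivAt (fun t : ℝ => exp ((t : ℂ) • B)) (B * exp ((s : ℂ) • B)) s := by
  simpa [Function.comp_def] using
    (hasDerivAt_exp_smul_const' B (s : ℂ)).scomp s ofRealCLM.hasDerivAt

theorem hasDerivAt_exp_neg_smul_mul_mul_exp_smul_s10 {F : ℝ → A} {F' : A} {s : ℝ} (B : A)
    (hF : HasDerivAt F F' s) :
    HasDerivAt (fun t : ℝ => exp (-((t : ℂ) • B)) * F t * exp ((t : ℂ) • B))
      (exp (-((s : ℂ) • B)) * (F' + (F s * B - B * F s)) * exp ((s : ℂ) • B)) s := by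
  have h := ((hasDerivAt_exp_ofReal_smul (-B) s).mul hF).mul (hasDerivAt_exp_ofReal_smul' B s)
  simp only [smul_neg, Pi.mul_apply] at h
  refine h.congr_deriv ?_
  noncomm_ring

end Conjugation

theorem I_smul_add_commutator_eq_smul_double_commutator {A : Type*} [Ring A] [Algebra ℂ A]
    (D P : A) (s : ℝ) :
    I • (P * D - D * P) + ((D + (I * s) • (P * D - D * P)) * (I • P)
      - I • P * (D + (I * s) • (P * D - D * P)))
      = (s : ℂ) • ((D * P - P * D) * P - P * (D * P - P * D)) := by
  simp only [mul_add, add_mul, mul_sub, sub_mul, smul_mul_assoc, mul_smul_comm]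
  match_scalars <;> ring_nf <;> simp only [I_sq] <;> ring

theorem norm_exp_neg_mul_mul_exp {A : Type*} [NormedRing A] [NormedAlgebra ℚ A] [CompleteSpace A]
    [StarRing A] [CStarRing A] [ContinuousStar A] {B : A} (hB : B ∈ skewAdjoint A) (X : A) :
    ‖exp (-B) * X * exp B‖ = ‖X‖ := by
  rw [CStarRing.norm_mul_mem_unitary _ (exp_mem_unitary_of_mem_skewAdjoint hB),
    CStarRing.norm_mem_unitary_mul _ (exp_mem_unitary_of_mem_skewAdjoint (neg_mem hB))]

theorem IsSelfAdjoint.ofReal_smul_I_smul_mem_skewAdjoint {A : Type*} [AddCommGroup A]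
    [Module ℂ A] [StarAddMonoid A] [StarModule ℂ A] {P : A} (hP : IsSelfAdjoint P) (t : ℝ) :
    (t : ℂ) • (I • P) ∈ skewAdjoint A := by
  rw [smul_smul]
  exact hP.smul_mem_skewAdjoint (by simp [skewAdjoint.mem_iff])

theorem conjugation_double_commutator_bound_general
    {H : Type*} [NormedAddCommGroup H] [InnerProductSpace ℂ H] [CompleteSpace H]
    (D P : H →L[ℂ] H) (hP : IsSelfAdjoint P)
    (G : ℝ → H →L[ℂ] H)
    (hG : ∀ s : ℝ, G s = NormedSpace.exp (-((s : ℂ) • (Complex.I • P)))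
      * (D + (Complex.I * s) • (P * D - D * P))
      * NormedSpace.exp ((s : ℂ) • (Complex.I • P)) - D) :
    ‖G 1‖ ≤ (1 / 2) * ‖(D * P - P * D) * P - P * (D * P - P * D)‖ := by
  -- `exp` is the `ℚ`-exponential series; its lemmas want the `ℚ`-algebra structure as an instance.
  let _ : NormedAlgebra ℚ (H →L[ℂ] H) := .restrictScalars ℚ ℂ _
  set C := (D * P - P * D) * P - P * (D * P - P * D)
  have hderiv (s : ℝ) : HasDerivAt G
      (exp (-((s : ℂ) • (I • P))) * ((s : ℂ) • C) * exp ((s : ℂ) • (I • P))) s := by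
    have hline :
        HasDerivAt (fun t : ℝ => D + (I * t) • (P * D - D * P)) (I • (P * D - D * P)) s := by
      simpa using (((hasDerivAt_id s).ofReal_comp.const_mul I).smul_const
        (P * D - D * P)).const_add D
    rw [funext hG, ← I_smul_add_commutator_eq_smul_double_commutator]
    exact (hasDerivAt_exp_neg_smul_mul_mul_exp_smul_s10 (I • P) hline).sub_const D
  have hbound (s : ℝ) (hs : s ∈ Ico 0 1) :
      ‖exp (-((s : ℂ) • (I • P))) * ((s : ℂ) • C) * exp ((s : ℂ) • (I • P))‖ ≤ ‖C‖ * s := by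
    rw [norm_exp_neg_mul_mul_exp (hP.ofReal_smul_I_smul_mem_skewAdjoint s), norm_smul,
      norm_real, Real.norm_of_nonneg hs.1, mul_comm]
  have hG0 : G 0 = 0 := by simp [hG]
  have := norm_le_of_norm_deriv_le_mul zero_le_one hG0 (fun s _ => hderiv s) hbound
  linarith

/-- For a self-adjoint `D` and a self-adjoint finite rank
bounded `P` on a complex Hilbert space, with
`G(s) = e^{-isP}(D + is[P,D])e^{isP} − D`, one has
`‖G(1)‖ ≤ (1/2)‖[[D,P],P]‖`. -/
theorem conjugation_double_commutator_bound
    {H : Type*} [NormedAddCommGroup H] [InnerProductSpace ℂ H] [CompleteSpace H]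
    (D P : H →L[ℂ] H) (hD : IsSelfAdjoint D) (hP : IsSelfAdjoint P)
    (hrank : FiniteDimensional ℂ (LinearMap.range (P : H →ₗ[ℂ] H)))
    (G : ℝ → H →L[ℂ] H)
    (hG : ∀ s : ℝ, G s = NormedSpace.exp (-((s : ℂ) • (Complex.I • P)))
      * (D + (Complex.I * s) • (P * D - D * P))
      * NormedSpace.exp ((s : ℂ) • (Complex.I • P)) - D) :
    ‖G 1‖ ≤ (1 / 2) * ‖(D * P - P * D) * P - P * (D * P - P * D)‖ :=
  conjugation_double_commutator_bound_general D P hP G hG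
end
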